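/- Let X and Y be Banach spaces, with Y a closed subspace of X. Let g : X → Y be a Lipschitz map with Lipschitz constant α such that lim_{n→∞} g(n·y)/n = y for every y ∈ Y. Let 𝒰 be a free ultrafilter on ℕ and define P : X → Y** by P(x) = weak*-lim_{𝒰} g(n·x)/n (the limit exists by Banach–Alaoglu since the sequence is bounded in Y ⊆ Y**). Then P is a Lipschitz map with Lipschitz constant at most α, and P(y) = j(y) for all y ∈ Y, where j : Y → Y** is the canonical embedding. -/

import Mathlib

/-! Every rescaling `x ↦ g (n • x) / n` is `α`-Lipschitz, and a pointwise weak* limit of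
`α`-Lipschitz maps into `Y**` is again `α`-Lipschitz, because the norm of `Y**` is weak* lower
semicontinuous. On `Y` the rescalings converge in norm to `y`, so their weak* limit is `j y`. -/

open Filter NormedSpace

/-- The topological dual of a seminormed space `E`, as `NormedSpace.Dual` was defined in the
older Mathlib (now `StrongDual`, whose topology on `E` is found by another route). -/
abbrev Dual (𝕜 : Type*) [NontriviallyNormedField 𝕜] (E : Type*) [SeminormedAddCommGroup E]
    [NormedSpace 𝕜 E] : Type _ :=
  StrongDual 𝕜 E

section

variable {E F : Type*} [SeminormedAddCommGroup E] [NormedSpace ℝ E]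
  [SeminormedAddCommGroup F] [NormedSpace ℝ F]

theorem LipschitzWith.inv_smul_comp_smul {K : NNReal} {g : E → F} (hg : LipschitzWith K g)
    (c : ℝ) : LipschitzWith K (fun x => c⁻¹ • g (c • x)) := by
  rcases eq_or_ne c 0 with rfl | hc
  · simpa using (LipschitzWith.const (α := E) (0 : F)).weaken bot_le
  refine LipschitzWith.of_dist_le_mul fun x x' => ?_
  calc dist (c⁻¹ • g (c • x)) (c⁻¹ • g (c • x')) = ‖c‖⁻¹ * dist (g (c • x)) (g (c • x')) := by
        rw [dist_smul₀, norm_inv]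
    _ ≤ ‖c‖⁻¹ * (K * (‖c‖ * dist x x')) := by
        gcongr
        rw [← dist_smul₀]
        exact hg.dist_le_mul _ _
    _ = K * dist x x' := by field_simp

end

section

variable {𝕜 ι E F : Type*} [NontriviallyNormedField 𝕜]
  [SeminormedAddCommGroup E] [SeminormedAddCommGroup F] [NormedSpace 𝕜 F]
  {l : Filter ι} {f : ι → E → F} {P : E → Dual 𝕜 (Dual 𝕜 F)}

theorem LipschitzWith.of_tendsto_weakStar [l.NeBot] {K : NNReal}
    (hf : ∀ i, LipschitzWith K (f i))
    (hP : ∀ x (φ : Dual 𝕜 F), Tendsto (fun i => φ (f i x)) l (nhds (P x φ))) :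
    LipschitzWith K P := by
  refine LipschitzWith.of_dist_le_mul fun x x' => ?_
  rw [dist_eq_norm]
  refine ContinuousLinearMap.opNorm_le_bound _ (by positivity) fun φ => ?_
  have hdiff := ((hP x φ).sub (hP x' φ)).norm
  refine le_of_tendsto' hdiff fun i => ?_
  calc ‖φ (f i x) - φ (f i x')‖ = ‖φ (f i x - f i x')‖ := by rw [map_sub]
    _ ≤ ‖φ‖ * dist (f i x) (f i x') := by rw [dist_eq_norm]; exact φ.le_opNorm _
    _ ≤ ‖φ‖ * (K * dist x x') := by gcongr; exact (hf i).dist_le_mul x x'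
    _ = K * dist x x' * ‖φ‖ := by ring

theorem eq_inclusionInDoubleDual_of_tendsto [l.NeBot] {u : ι → F} {y : F}
    {Φ : Dual 𝕜 (Dual 𝕜 F)} (hu : Tendsto u l (nhds y))
    (hΦ : ∀ φ : Dual 𝕜 F, Tendsto (fun i => φ (u i)) l (nhds (Φ φ))) :
    Φ = inclusionInDoubleDual 𝕜 F y := by
  ext φ
  exact tendsto_nhds_unique (hΦ φ) ((φ.continuous.tendsto y).comp hu)

end

theorem stmt2_general {X : Type*} [NormedAddCommGroup X] [NormedSpace ℝ X]
    (Y : Subspace ℝ X)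
    (g : X → Y) (α : NNReal) (hg : LipschitzWith α g)
    (hlim : ∀ y : Y, Tendsto (fun n : ℕ => ((n : ℝ)⁻¹ : ℝ) • g ((n : ℝ) • (y : X)))
      atTop (nhds y))
    (𝒰 : Ultrafilter ℕ) (h𝒰 : (𝒰 : Filter ℕ) ≤ Filter.cofinite)
    (P : X → Dual ℝ (Dual ℝ Y))
    (hP : ∀ (x : X) (φ : Dual ℝ Y),
      Tendsto (fun n : ℕ => ((n : ℝ)⁻¹ : ℝ) * φ (g ((n : ℝ) • x)))
        (𝒰 : Filter ℕ) (nhds (P x φ))) :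
    LipschitzWith α P ∧ ∀ y : Y, P y = inclusionInDoubleDual ℝ Y y := by
  have hP' : ∀ (x : X) (φ : Dual ℝ Y),
      Tendsto (fun n : ℕ => φ (((n : ℝ)⁻¹ : ℝ) • g ((n : ℝ) • x))) 𝒰 (nhds (P x φ)) := by
    simpa only [map_smul, smul_eq_mul] using hP
  have h𝒰_atTop : (𝒰 : Filter ℕ) ≤ atTop := h𝒰.trans Nat.cofinite_eq_atTop.le
  refine ⟨LipschitzWith.of_tendsto_weakStar
    (f := fun (n : ℕ) x => ((n : ℝ)⁻¹ : ℝ) • g ((n : ℝ) • x))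
    (fun n => hg.inv_smul_comp_smul n) hP', fun y => ?_⟩
  exact eq_inclusionInDoubleDual_of_tendsto ((hlim y).mono_left h𝒰_atTop) (hP' y)

/-- if `g : X → Y` is `α`-Lipschitz with `g (n • y)/n → y` for every
`y ∈ Y`, `𝒰` is a free ultrafilter on `ℕ`, and `P : X → Y**` assigns to each `x`
the weak* limit of `g (n • x)/n` along `𝒰`, then `P` is `α`-Lipschitz and `P`
agrees with the canonical embedding `j : Y → Y**` on `Y`. -/
theorem stmt2 {X : Type*} [NormedAddCommGroup X] [NormedSpace ℝ X] [CompleteSpace X]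
    (Y : Subspace ℝ X) (hYc : IsClosed (Y : Set X))
    (g : X → Y) (α : NNReal) (hg : LipschitzWith α g)
    (hlim : ∀ y : Y, Tendsto (fun n : ℕ => ((n : ℝ)⁻¹ : ℝ) • g ((n : ℝ) • (y : X)))
      atTop (nhds y))
    (𝒰 : Ultrafilter ℕ) (h𝒰 : (𝒰 : Filter ℕ) ≤ Filter.cofinite)
    (P : X → Dual ℝ (Dual ℝ Y))
    (hP : ∀ (x : X) (φ : Dual ℝ Y),
      Tendsto (fun n : ℕ => ((n : ℝ)⁻¹ : ℝ) * φ (g ((n : ℝ) • x)))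
        (𝒰 : Filter ℕ) (nhds (P x φ))) :
    LipschitzWith α P ∧ ∀ y : Y, P y = inclusionInDoubleDual ℝ Y y :=
  stmt2_general Y g α hg hlim 𝒰 h𝒰 P hP
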